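/- Let (T, [·,·,·], α) be a regular Hom-Lie triple system over a commutative ring k with Char(k) ≠ 2, and let U(T) = ⟨T,T⟩ ⊕ T be the ℤ₂-graded Lie algebra with bracket [X + a, Y + b] = ([X,Y] + ⟨a,b⟩) + (μ^{α⁻¹}(X)(b) − μ^{α⁻¹}(Y)(a)). Then the linear map α_U : U(T) → U(T) determined by α_U|_T = α and α_U(⟨a,b⟩) = ⟨α(a), α(b)⟩ is well defined and is a graded Lie algebra automorphism of U(T); its inverse is the analogous extension of α⁻¹. -/
import Mathlib


open TensorProduct

/-- The relations defining the exterior square: the span of the squares `a ⊗ a`. -/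
def sqRel (k T : Type*) [CommRing k] [AddCommGroup T] [Module k T] :
    Submodule k (T ⊗[k] T) :=
  Submodule.span k {x | ∃ a : T, x = a ⊗ₜ[k] a}

/-- The exterior square `T ∧ T` of the `k`-module `T`. -/
abbrev Wedge (k T : Type*) [CommRing k] [AddCommGroup T] [Module k T] :=
  (T ⊗[k] T) ⧸ sqRel k T

/-- The wedge `a ∧ b ∈ T ∧ T`. -/
noncomputable def wedge {k T : Type*} [CommRing k] [AddCommGroup T] [Module k T]
    (a b : T) : Wedge k T :=
  Submodule.Quotient.mk (a ⊗ₜ[k] b)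

/-- The action `D · (x ∧ y) = D^{α⁻¹}(x) ∧ y + x ∧ D^{α⁻¹}(y)` of `End(T)` on `T ∧ T`. -/
noncomputable def act {k T : Type*} [CommRing k] [AddCommGroup T] [Module k T]
    (α : T ≃ₗ[k] T) (D : Module.End k T) (x y : T) : Wedge k T :=
  wedge (α.symm (D x)) y + wedge x (α.symm (D y))

/-- The submodule `A(T∧T)` spanned by `D_{a,b}·(a∧b)` and `D_{a,b}·(c∧d) + D_{c,d}·(a∧b)`. -/
def ATT {k T : Type*} [CommRing k] [AddCommGroup T] [Module k T]
    (t : T →ₗ[k] T →ₗ[k] T →ₗ[k] T) (α : T ≃ₗ[k] T) : Submodule k (Wedge k T) :=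
  Submodule.span k
    ({z | ∃ a b : T, z = act α (t a b) a b} ∪
      {z | ∃ a b c d : T, z = act α (t a b) c d + act α (t c d) a b})

/-- The quotient `⟨T,T⟩ = (T∧T)/A(T∧T)`. -/
abbrev QTT {k T : Type*} [CommRing k] [AddCommGroup T] [Module k T]
    (t : T →ₗ[k] T →ₗ[k] T →ₗ[k] T) (α : T ≃ₗ[k] T) :=
  Wedge k T ⧸ ATT t α

/-- The coset `⟨a,b⟩ ∈ ⟨T,T⟩` of `a ∧ b`. -/
noncomputable def cls {k T : Type*} [CommRing k] [AddCommGroup T] [Module k T]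
    (t : T →ₗ[k] T →ₗ[k] T →ₗ[k] T) (α : T ≃ₗ[k] T) (a b : T) : QTT t α :=
  Submodule.Quotient.mk (wedge a b)

/-- The bracket of `U(T) = ⟨T,T⟩ ⊕ T`. -/
noncomputable def ubr {k T : Type*} [CommRing k] [AddCommGroup T] [Module k T]
    (t : T →ₗ[k] T →ₗ[k] T →ₗ[k] T) (α : T ≃ₗ[k] T)
    (br : QTT t α →ₗ[k] QTT t α →ₗ[k] QTT t α)
    (μ : QTT t α →ₗ[k] Module.End k T)
    (u v : QTT t α × T) : QTT t α × T :=
  (br u.1 v.1 + cls t α u.2 v.2, α.symm (μ u.1 v.2) - α.symm (μ v.1 u.2))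


section Aux
variable {k T : Type*} [CommRing k] [AddCommGroup T] [Module k T]

lemma map_sqRel (α : T ≃ₗ[k] T) :
    (sqRel k T).map (TensorProduct.congr α α).toLinearMap = sqRel k T := by
  unfold sqRel
  rw [Submodule.map_span]
  congr 1
  ext x
  constructor
  · rintro ⟨y, ⟨a, rfl⟩, rfl⟩
    exact ⟨α a, by simp⟩
  · rintro ⟨a, rfl⟩
    exact ⟨α.symm a ⊗ₜ α.symm a, ⟨α.symm a, rfl⟩, by simp⟩

noncomputable def wEquiv (α : T ≃ₗ[k] T) : Wedge k T ≃ₗ[k] Wedge k T :=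
  Submodule.Quotient.equiv _ _ (TensorProduct.congr α α) (map_sqRel α)

lemma wEquiv_wedge (α : T ≃ₗ[k] T) (a b : T) :
    wEquiv α (wedge a b) = wedge (α a) (α b) := by
  simp [wEquiv, wedge, Submodule.Quotient.equiv_apply, Submodule.mapQ_apply]

variable (t : T →ₗ[k] T →ₗ[k] T →ₗ[k] T) (α : T ≃ₗ[k] T)
  (h4 : ∀ a b c : T, α (t a b c) = t (α a) (α b) (α c))

include h4 in
lemma wEquiv_act (D : Module.End k T) (x y : T) (a b : T) (hD : D = t a b) :
    wEquiv α (act α D x y) = act α (t (α a) (α b)) (α x) (α y) := by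
  have e1 : ∀ c, α.symm (t (α a) (α b) (α c)) = t a b c := fun c => by
    rw [← h4]; simp
  subst hD
  simp only [act, map_add, wEquiv_wedge, e1, LinearEquiv.apply_symm_apply]

include h4 in
lemma map_ATT : (ATT t α).map (wEquiv α).toLinearMap = ATT t α := by
  unfold ATT
  rw [Submodule.map_span]
  apply le_antisymm
  · rw [Submodule.span_le]
    rintro _ ⟨z, hz, rfl⟩
    rcases hz with ⟨a, b, rfl⟩ | ⟨a, b, c, d, rfl⟩
    · refine Submodule.subset_span (Set.mem_union_left _ ?_)
      exact ⟨α a, α b, wEquiv_act t α h4 (t a b) a b a b rfl⟩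
    · refine Submodule.subset_span (Set.mem_union_right _ ?_)
      refine ⟨α a, α b, α c, α d, ?_⟩
      show wEquiv α _ = _
      rw [map_add, wEquiv_act t α h4 (t a b) c d a b rfl,
        wEquiv_act t α h4 (t c d) a b c d rfl]
  · rw [Submodule.span_le]
    rintro z (⟨a, b, rfl⟩ | ⟨a, b, c, d, rfl⟩)
    · apply Submodule.subset_span
      rw [Set.mem_image]
      refine ⟨act α (t (α.symm a) (α.symm b)) (α.symm a) (α.symm b), ?_, ?_⟩
      · apply Set.mem_union_left
        exact ⟨_, _, rfl⟩
      show wEquiv α _ = _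
      rw [wEquiv_act t α h4 (t (α.symm a) (α.symm b)) (α.symm a) (α.symm b)
        (α.symm a) (α.symm b) rfl]
      simp
    · apply Submodule.subset_span
      rw [Set.mem_image]
      refine ⟨act α (t (α.symm a) (α.symm b)) (α.symm c) (α.symm d)
        + act α (t (α.symm c) (α.symm d)) (α.symm a) (α.symm b), ?_, ?_⟩
      · apply Set.mem_union_right
        exact ⟨_, _, _, _, rfl⟩
      show wEquiv α _ = _
      rw [map_add, wEquiv_act t α h4 (t (α.symm a) (α.symm b)) (α.symm c) (α.symm d) _ _ rfl,
        wEquiv_act t α h4 (t (α.symm c) (α.symm d)) (α.symm a) (α.symm b) _ _ rfl]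
      simp

noncomputable def qEquiv : QTT t α ≃ₗ[k] QTT t α :=
  Submodule.Quotient.equiv _ _ (wEquiv α) (map_ATT t α h4)

lemma qEquiv_cls (a b : T) :
    qEquiv t α h4 (cls t α a b) = cls t α (α a) (α b) := by
  simp only [qEquiv, cls, Submodule.Quotient.equiv_apply, Submodule.mapQ_apply,
    LinearEquiv.coe_coe]
  rw [wEquiv_wedge]

lemma span_cls : Submodule.span k {z : QTT t α | ∃ a b : T, z = cls t α a b} = ⊤ := by
  rw [eq_top_iff]
  rintro x -
  obtain ⟨y, rfl⟩ := Submodule.Quotient.mk_surjective _ x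
  obtain ⟨z, rfl⟩ := Submodule.Quotient.mk_surjective _ y
  induction z using TensorProduct.induction_on with
  | zero => exact Submodule.zero_mem _
  | tmul a b => exact Submodule.subset_span ⟨a, b, rfl⟩
  | add x y hx hy =>
    simp only [Submodule.Quotient.mk_add]
    exact Submodule.add_mem _ hx hy

end Aux
/-- For a regular Hom-Lie triple system `(T, [·,·,·], α)` over a commutative
ring `k` with Char(k) ≠ 2, the linear map `α_U : U(T) → U(T)` determined by `α_U|_T = α` and
`α_U⟨a,b⟩ = ⟨α a, α b⟩` is well defined and is a graded Lie algebra automorphism of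
`U(T) = ⟨T,T⟩ ⊕ T`, whose inverse is the analogous extension of `α⁻¹`. -/
theorem stmt13 {k T : Type*} [CommRing k] [Invertible (2 : k)]
    [AddCommGroup T] [Module k T]
    (t : T →ₗ[k] T →ₗ[k] T →ₗ[k] T) (α : T ≃ₗ[k] T)
    (h1 : ∀ a b : T, t a a b = 0)
    (h2 : ∀ a b c : T, t a b c + t b c a + t c a b = 0)
    (h3 : ∀ a b c d e : T, t (α a) (α b) (t c d e) =
      t (t a b c) (α d) (α e) + t (α c) (t a b d) (α e) + t (α c) (α d) (t a b e))
    (h4 : ∀ a b c : T, α (t a b c) = t (α a) (α b) (α c))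
    (br : QTT t α →ₗ[k] QTT t α →ₗ[k] QTT t α)
    (hbr : ∀ a b c d : T, br (cls t α a b) (cls t α c d)
      = cls t α (α.symm (t a b c)) d + cls t α c (α.symm (t a b d)))
    (μ : QTT t α →ₗ[k] Module.End k T)
    (hμ : ∀ a b : T, μ (cls t α a b) = t a b) :
    -- `α_U` exists: there is a bijective `k`-linear map on the even part ⟨T,T⟩
    ∃ β : QTT t α ≃ₗ[k] QTT t α,
      -- determined by `α_U⟨a,b⟩ = ⟨α a, α b⟩`
      (∀ a b : T, β (cls t α a b) = cls t α (α a) (α b)) ∧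
      -- whose inverse is the analogous extension of `α⁻¹`
      (∀ a b : T, β.symm (cls t α a b) = cls t α (α.symm a) (α.symm b)) ∧
      -- such that the (graded, bijective) map `α_U(X + a) = β(X) + α(a)` is a
      -- Lie algebra homomorphism of U(T):
      (∀ u v : QTT t α × T,
        ((β ((ubr t α br μ u v).1), α ((ubr t α br μ u v).2)) : QTT t α × T)
          = ubr t α br μ (β u.1, α u.2) (β v.1, α v.2)) := by
  set β := qEquiv t α h4 with hβ
  have e1 : ∀ x y z : T, α.symm (t (α x) (α y) (α z)) = t x y z := fun x y z => by
    rw [← h4]; simp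
  have keybr : ∀ X Y : QTT t α, β (br X Y) = br (β X) (β Y) := by
    have h : (LinearMap.llcomp k _ _ _ (β : QTT t α →ₗ[k] QTT t α)).comp br
        = (LinearMap.lcomp k _ (β : QTT t α →ₗ[k] QTT t α)).comp
            (br.comp (β : QTT t α →ₗ[k] QTT t α)) := by
      apply LinearMap.ext_on (span_cls t α)
      rintro _ ⟨a, b, rfl⟩
      apply LinearMap.ext_on (span_cls t α)
      rintro _ ⟨c, d, rfl⟩
      simp only [LinearMap.comp_apply, LinearMap.llcomp_apply, LinearMap.lcomp_apply,
        LinearEquiv.coe_coe, hβ]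
      rw [hbr, map_add, qEquiv_cls, qEquiv_cls, qEquiv_cls, qEquiv_cls, hbr, e1, e1]
      simp
    intro X Y
    exact DFunLike.congr_fun (DFunLike.congr_fun h X) Y
  have keyμ : ∀ (X : QTT t α) (b : T), μ (β X) (α b) = α (μ X b) := by
    have h : (LinearMap.lcomp k T (α : T →ₗ[k] T)).comp
          (μ.comp (β : QTT t α →ₗ[k] QTT t α))
        = (LinearMap.llcomp k T T T (α : T →ₗ[k] T)).comp μ := by
      apply LinearMap.ext_on (span_cls t α)
      rintro _ ⟨a, b, rfl⟩
      apply LinearMap.ext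
      intro c
      simp only [LinearMap.comp_apply, LinearMap.llcomp_apply, LinearMap.lcomp_apply,
        LinearEquiv.coe_coe, hβ]
      rw [qEquiv_cls, hμ, hμ, ← h4]
    intro X b
    exact DFunLike.congr_fun (DFunLike.congr_fun h X) b
  refine ⟨β, fun a b => qEquiv_cls t α h4 a b, fun a b => ?_, fun u v => ?_⟩
  · apply β.injective
    rw [LinearEquiv.apply_symm_apply, hβ, qEquiv_cls]
    simp
  · refine Prod.ext ?_ ?_
    · show β (br u.1 v.1 + cls t α u.2 v.2) = br (β u.1) (β v.1) + cls t α (α u.2) (α v.2)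
      rw [map_add, keybr, hβ, qEquiv_cls]
    · show α (α.symm (μ u.1 v.2) - α.symm (μ v.1 u.2))
        = α.symm (μ (β u.1) (α v.2)) - α.symm (μ (β v.1) (α u.2))
      rw [keyμ, keyμ, map_sub]
      simp
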